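/- Let A be a nonempty finite action set and let Δmax ≥ 0, α ≥ 0. There exists a constant C (one may take C = √2 · (2·Δmax + α) · √|A|) such that for every horizon T, every prediction sequence p^1, …, p^T with p^t ∈ [−α, α]^A, and every reward sequence x^1, …, x^T with all coordinates contained in some interval of length Δmax, the external regret of predictive regret matching satisfies max_{a∈A} R^T_a ≤ C · √T; hence the external regret grows sublinearly in T for every such reward sequence. -/

import Mathlib

open Finset

/-!
The proof is Blackwell's potential argument with the potential `Φ(R) = ‖[R]⁺‖₂²`.
Since `σ^t` is proportional to `ξ^t = [R^{t-1} + p^t]⁺`, the regret `r^t` is orthogonal to `ξ^t`;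
and `[R^{t-1}]⁺` differs from `ξ^t` by at most `|p^t_a| ≤ α` in each coordinate, while
`|r^t_a| ≤ Δmax`. Expanding the square therefore gives `Φ(R^t) ≤ Φ(R^{t-1}) + |A|(2αΔmax + Δmax²)`,
so `max_a R^T_a ≤ √Φ(R^T) ≤ √(T |A| (2αΔmax + Δmax²)) ≤ C √T`.
-/

/-- Instantaneous regret vector: `r(σ, x)_a = x_a − ⟨σ, x⟩`. -/
noncomputable def instRegret {A : Type*} [Fintype A] (σ x : A → ℝ) : A → ℝ :=
  fun a => x a - ∑ b, σ b * x b

/-- Strategy obtained by normalizing a nonnegative vector `ξ`; uniform if `ξ = 0`. -/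
noncomputable def stratOf {A : Type*} [Fintype A] (ξ : A → ℝ) : A → ℝ :=
  if 0 < ∑ a, ξ a then fun a => ξ a / ∑ b, ξ b
  else fun _ => (Fintype.card A : ℝ)⁻¹

/-- PRM strategy from previous cumulative regret `R` and current prediction `pt`:
`σ = [R + p]⁺ / ‖[R + p]⁺‖₁` (uniform if the positive part vanishes). -/
noncomputable def prmSigmaAux {A : Type*} [Fintype A] (pt R : A → ℝ) : A → ℝ :=
  stratOf (fun a => max (R a + pt a) 0)

/-- PRM cumulative regret: `R^0 = 0`, `R^t = R^{t−1} + r(σ^t, x^t)`. -/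
noncomputable def prmR {A : Type*} [Fintype A] (p x : ℕ → A → ℝ) : ℕ → A → ℝ
  | 0 => fun _ => 0
  | t + 1 => fun a =>
      prmR p x t a + instRegret (prmSigmaAux (p (t + 1)) (prmR p x t)) (x (t + 1)) a

/-- PRM strategy at step `t ≥ 1`. -/
noncomputable def prmSigma {A : Type*} [Fintype A] (p x : ℕ → A → ℝ) (t : ℕ) : A → ℝ :=
  prmSigmaAux (p t) (prmR p x (t - 1))

section Potential

variable {A : Type*} [Fintype A]

noncomputable def regretPotential (R : A → ℝ) : ℝ := ∑ a, max (R a) 0 ^ 2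

lemma le_sqrt_regretPotential (R : A → ℝ) (a : A) : R a ≤ √(regretPotential R) :=
  calc R a ≤ |max (R a) 0| := (le_max_left _ _).trans (le_abs_self _)
    _ ≤ √(regretPotential R) :=
      Real.abs_le_sqrt <| single_le_sum (fun b _ => sq_nonneg (max (R b) 0)) (mem_univ a)

lemma max_add_zero_sq_le (u v : ℝ) :
    max (u + v) 0 ^ 2 ≤ max u 0 ^ 2 + 2 * max u 0 * v + v ^ 2 := by
  rw [← add_sq]
  rcases le_total (u + v) 0 with h | h
  · rw [max_eq_right h]
    simpa using sq_nonneg (max u 0 + v)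
  · rw [max_eq_left h]
    exact pow_le_pow_left₀ h (by linarith [le_max_left u 0]) 2

lemma regretPotential_add_le (R r : A → ℝ) :
    regretPotential (R + r) ≤
      regretPotential R + 2 * ∑ a, max (R a) 0 * r a + ∑ a, r a ^ 2 := by
  simp only [regretPotential, Pi.add_apply, mul_sum, ← sum_add_distrib]
  gcongr with a
  linarith [max_add_zero_sq_le (R a) (r a)]

lemma stratOf_nonneg {ξ : A → ℝ} (hξ : ∀ a, 0 ≤ ξ a) (a : A) : 0 ≤ stratOf ξ a := by
  unfold stratOf
  split_ifs with h
  · exact div_nonneg (hξ a) h.le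
  · positivity

lemma sum_stratOf [Nonempty A] (ξ : A → ℝ) : ∑ a, stratOf ξ a = 1 := by
  unfold stratOf
  split_ifs with h
  · rw [← sum_div, div_self h.ne']
  · simp

lemma sum_mul_instRegret {σ : A → ℝ} (hσ : ∑ a, σ a = 1) (x : A → ℝ) :
    ∑ a, σ a * instRegret σ x a = 0 := by
  simp only [instRegret, mul_sub, sum_sub_distrib, ← sum_mul, hσ, one_mul, sub_self]

lemma sum_mul_instRegret_stratOf [Nonempty A] {ξ : A → ℝ} (hξ : ∀ a, 0 ≤ ξ a)
    (x : A → ℝ) : ∑ a, ξ a * instRegret (stratOf ξ) x a = 0 := by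
  by_cases h : 0 < ∑ a, ξ a
  · have hξσ : ∀ a, ξ a = (∑ b, ξ b) * stratOf ξ a := fun a => by
      rw [stratOf, if_pos h]
      field_simp
    calc ∑ a, ξ a * instRegret (stratOf ξ) x a
        = ∑ a, (∑ b, ξ b) * (stratOf ξ a * instRegret (stratOf ξ) x a) :=
          sum_congr rfl fun a _ => by rw [hξσ a, mul_assoc]
      _ = 0 := by rw [← mul_sum, sum_mul_instRegret (sum_stratOf ξ), mul_zero]
  · have hξ0 : ∀ a ∈ univ, ξ a = 0 :=
      (sum_eq_zero_iff_of_nonneg fun a _ => hξ a).mp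
        (le_antisymm (not_lt.mp h) (sum_nonneg fun a _ => hξ a))
    exact sum_eq_zero fun a ha => by rw [hξ0 a ha, zero_mul]

lemma abs_instRegret_le {σ : A → ℝ} (hσ0 : ∀ a, 0 ≤ σ a) (hσ1 : ∑ a, σ a = 1)
    {x : A → ℝ} {c Δ : ℝ} (hx : ∀ a, x a ∈ Set.Icc c (c + Δ)) (a : A) :
    |instRegret σ x a| ≤ Δ := by
  have hlo : c ≤ ∑ b, σ b * x b :=
    calc c = ∑ b, σ b * c := by rw [← sum_mul, hσ1, one_mul]
      _ ≤ ∑ b, σ b * x b := by gcongr with b; exacts [hσ0 b, (hx b).1]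
  have hhi : ∑ b, σ b * x b ≤ c + Δ :=
    calc ∑ b, σ b * x b ≤ ∑ b, σ b * (c + Δ) := by gcongr with b; exacts [hσ0 b, (hx b).2]
      _ = c + Δ := by rw [← sum_mul, hσ1, one_mul]
  rw [abs_le, instRegret]
  constructor <;> linarith [(hx a).1, (hx a).2]

lemma sum_max_mul_instRegret_prmSigmaAux_le [Nonempty A] {α Δ : ℝ} (R pt x : A → ℝ)
    (hp : ∀ a, |pt a| ≤ α) (hr : ∀ a, |instRegret (prmSigmaAux pt R) x a| ≤ Δ) :
    ∑ a, max (R a) 0 * instRegret (prmSigmaAux pt R) x a ≤ Fintype.card A * (α * Δ) := by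
  set ξ : A → ℝ := fun a => max (R a + pt a) 0
  set r := instRegret (prmSigmaAux pt R) x
  have hξr : ∑ a, ξ a * r a = 0 := sum_mul_instRegret_stratOf (fun a => le_max_right _ _) x
  have hterm : ∀ a, (max (R a) 0 - ξ a) * r a ≤ α * Δ := fun a =>
    calc (max (R a) 0 - ξ a) * r a ≤ |max (R a) 0 - ξ a| * |r a| :=
          (le_abs_self _).trans (abs_mul _ _).le
      _ ≤ |pt a| * |r a| := by
          refine mul_le_mul_of_nonneg_right ?_ (abs_nonneg _)
          have h := abs_max_sub_max_le_abs (R a) (R a + pt a) 0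
          rwa [sub_add_cancel_left, abs_neg] at h
      _ ≤ α * Δ := mul_le_mul (hp a) (hr a) (abs_nonneg _) ((abs_nonneg _).trans (hp a))
  calc ∑ a, max (R a) 0 * r a = ∑ a, (max (R a) 0 - ξ a) * r a + ∑ a, ξ a * r a := by
        rw [← sum_add_distrib]
        simp only [sub_mul, sub_add_cancel]
    _ ≤ Fintype.card A * (α * Δ) := by
        rw [hξr, add_zero, ← nsmul_eq_mul, ← card_univ]
        exact sum_le_card_nsmul _ _ _ fun a _ => hterm a

lemma regretPotential_prm_step_le [Nonempty A] {α Δ c : ℝ} (R pt x : A → ℝ)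
    (hp : ∀ a, |pt a| ≤ α) (hx : ∀ a, x a ∈ Set.Icc c (c + Δ)) :
    regretPotential (R + instRegret (prmSigmaAux pt R) x) ≤
      regretPotential R + Fintype.card A * (2 * α * Δ + Δ ^ 2) := by
  set r := instRegret (prmSigmaAux pt R) x
  have hr : ∀ a, |r a| ≤ Δ :=
    abs_instRegret_le (stratOf_nonneg fun _ => le_max_right _ _) (sum_stratOf _) hx
  have hcross := sum_max_mul_instRegret_prmSigmaAux_le R pt x hp hr
  have hsq : ∑ a, r a ^ 2 ≤ Fintype.card A * Δ ^ 2 := by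
    rw [← nsmul_eq_mul, ← card_univ]
    exact sum_le_card_nsmul _ _ _ fun a _ => sq_le_sq' (abs_le.mp (hr a)).1 (abs_le.mp (hr a)).2
  linarith [regretPotential_add_le R r]

lemma prmR_succ (p x : ℕ → A → ℝ) (t : ℕ) :
    prmR p x (t + 1) =
      prmR p x t + instRegret (prmSigmaAux (p (t + 1)) (prmR p x t)) (x (t + 1)) :=
  rfl

lemma regretPotential_prmR_le [Nonempty A] {α Δ c : ℝ} {T : ℕ} (p x : ℕ → A → ℝ)
    (hp : ∀ t, 1 ≤ t → t ≤ T → ∀ a, |p t a| ≤ α)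
    (hx : ∀ t, 1 ≤ t → t ≤ T → ∀ a, x t a ∈ Set.Icc c (c + Δ)) :
    ∀ t ≤ T, regretPotential (prmR p x t) ≤ t * (Fintype.card A * (2 * α * Δ + Δ ^ 2)) := by
  intro t
  induction t with
  | zero => simp [regretPotential, prmR]
  | succ t ih =>
    intro ht
    have hstep := regretPotential_prm_step_le (prmR p x t) (p (t + 1)) (x (t + 1))
      (hp (t + 1) (Nat.le_add_left 1 t) ht) (hx (t + 1) (Nat.le_add_left 1 t) ht)
    rw [prmR_succ]
    push_cast
    linarith [ih (Nat.le_of_succ_le ht)]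

end Potential

/-- There is a constant `C` (e.g. `C = √2·(2Δmax+α)·√|A|`) such that for every
horizon `T`, every prediction sequence bounded in `[−α,α]^A`, and every reward
sequence with coordinates in some interval of length `Δmax`, the external regret
of PRM is at most `C·√T`; hence it grows sublinearly in `T`. -/
theorem prm_regret_minimizer
    {A : Type*} [Fintype A] [Nonempty A]
    (Δmax α : ℝ) (hΔ : 0 ≤ Δmax) (hα : 0 ≤ α) :
    ∃ C : ℝ, C = Real.sqrt 2 * (2 * Δmax + α) * Real.sqrt (Fintype.card A) ∧
      ∀ (T : ℕ) (p x : ℕ → A → ℝ),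
        (∀ t, 1 ≤ t → t ≤ T → ∀ a, |p t a| ≤ α) →
        (∃ c : ℝ, ∀ t, 1 ≤ t → t ≤ T → ∀ a, x t a ∈ Set.Icc c (c + Δmax)) →
        Finset.univ.sup' Finset.univ_nonempty (fun a => prmR p x T a) ≤
          C * Real.sqrt T := by
  refine ⟨_, rfl, fun T p x hp ⟨c, hx⟩ => sup'_le _ _ fun a _ => ?_⟩
  set C := √2 * (2 * Δmax + α) * √(Fintype.card A)
  have hC : 0 ≤ C := by positivity
  have hstep : Fintype.card A * (2 * α * Δmax + Δmax ^ 2) ≤ C ^ 2 := by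
    rw [mul_pow, mul_pow, Real.sq_sqrt zero_le_two, Real.sq_sqrt (Nat.cast_nonneg _)]
    have : 2 * α * Δmax + Δmax ^ 2 ≤ 2 * (2 * Δmax + α) ^ 2 := by nlinarith
    nlinarith [Nat.cast_nonneg (α := ℝ) (Fintype.card A)]
  calc prmR p x T a ≤ √(regretPotential (prmR p x T)) := le_sqrt_regretPotential _ a
    _ ≤ √(C ^ 2 * T) := by
        refine Real.sqrt_le_sqrt ((regretPotential_prmR_le p x hp hx T le_rfl).trans ?_)
        rw [mul_comm]
        exact mul_le_mul_of_nonneg_right hstep T.cast_nonneg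
    _ = C * √T := by rw [Real.sqrt_mul (sq_nonneg C), Real.sqrt_sq hC]
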